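/- Let G be a connected precolored split graph whose vertex set is partitioned into a nonempty clique K and an independent set I. Then there exists a solution of the free flooding game on G of minimum length in which every coloring operation recolors a vertex of K. -/

import Mathlib

open scoped Classical

/-- The set of vertices colored (and merged) by a coloring operation at `v`:
`v` together with all vertices in the same connected component as `v` in the
subgraph induced by the vertices of color `col v`. -/
def floodRegion {V C : Type*} (G : SimpleGraph V) (col : V → C) (v : V) : Set V :=
  {u | ∃ p : G.Walk v u, ∀ w ∈ p.support, col w = col v}

/-- The coloring operation `(v, c)`. -/
noncomputable def floodStep {V C : Type*} (G : SimpleGraph V) (col : V → C)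
    (v : V) (c : C) : V → C :=
  fun u => if u ∈ floodRegion G col v then c else col u

/-- Applying a sequence of coloring operations. -/
noncomputable def floodSeq {V C : Type*} (G : SimpleGraph V) (col : V → C) :
    List (V × C) → V → C
  | [] => col
  | op :: ops => floodSeq G (floodStep G col op.1 op.2) ops

/-- A sequence of coloring operations is a solution of the free flooding game if
applying it makes all vertices of `G` have the same color. -/
def IsFloodSolution {V C : Type*} (G : SimpleGraph V) (col : V → C)
    (ops : List (V × C)) : Prop :=
  ∃ c : C, ∀ u : V, floodSeq G col ops u = c

/-! Induct on a solution and look at its first move `(v, c)`. If the monochromatic region of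
`v` meets the clique `K`, the same move at a clique vertex of that region has the same effect.
Otherwise `v` lies in the independent part and its region is `{v}`. Its neighbours form a clique,
so any monochromatic walk through `v` can be shortcut around it, and clique moves therefore act
identically on two colorings that differ only at `v`. Hence the move at `v` can be dropped and
replaced by a final move at a neighbour of `v`, which gives the whole graph, by then
monochromatic off `v`, the color of `v`. -/

open SimpleGraph

section Flooding

variable {V C : Type*} {G : SimpleGraph V}

lemma mem_floodRegion_self (col : V → C) (v : V) : v ∈ floodRegion G col v :=
  ⟨Walk.nil, by simp⟩

lemma floodRegion_eq_of_mem {col : V → C} {v w : V} (h : w ∈ floodRegion G col v) :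
    floodRegion G col w = floodRegion G col v := by
  obtain ⟨p, hp⟩ := h
  have hcw : col w = col v := hp w p.end_mem_support
  ext u
  constructor
  · rintro ⟨q, hq⟩
    refine ⟨p.append q, fun x hx => ?_⟩
    rcases (Walk.mem_support_append_iff _ _).mp hx with hx | hx
    · exact hp x hx
    · rw [hq x hx, hcw]
  · rintro ⟨q, hq⟩
    refine ⟨p.reverse.append q, fun x hx => ?_⟩
    rw [hcw]
    rcases (Walk.mem_support_append_iff _ _).mp hx with hx | hx
    · exact hp x (by simpa using hx)
    · exact hq x hx

lemma floodStep_eq_of_mem {col : V → C} {v w : V} (h : w ∈ floodRegion G col v) (c : C) :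
    floodStep G col w c = floodStep G col v c := by
  unfold floodStep
  rw [floodRegion_eq_of_mem h]

lemma exists_adj_mem_floodRegion {col : V → C} {v u : V} (h : u ∈ floodRegion G col v)
    (hne : u ≠ v) : ∃ x, G.Adj v x ∧ x ∈ floodRegion G col v := by
  obtain ⟨p, hp⟩ := h
  cases p with
  | nil => exact absurd rfl hne
  | @cons _ x _ hvx q =>
    refine ⟨x, hvx, .cons hvx .nil, fun z hz => ?_⟩
    rcases List.mem_pair.mp (by simpa using hz) with rfl | rfl
    · rfl
    · exact hp z (by simp)

-- `v` may remain at the start of the walk so that the claim survives induction on it.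
lemma SimpleGraph.Walk.exists_support_subset_notMem_tail {v : V}
    (hv : G.IsClique (G.neighborSet v)) :
    ∀ {x u : V} (p : G.Walk x u), u ≠ v →
      ∃ q : G.Walk x u, q.support ⊆ p.support ∧ v ∉ q.support.tail
  | _, _, .nil, _ => ⟨.nil, List.Subset.refl _, by simp⟩
  | x, _, .cons (v := y) hxy p, hu => by
    obtain ⟨q, hqp, hqv⟩ := exists_support_subset_notMem_tail hv p hu
    by_cases hy : y = v
    · subst hy
      cases q with
      | nil => exact absurd rfl hu
      | @cons _ z _ hyz r =>
        have hrp : r.support ⊆ (Walk.cons hxy p).support := fun a ha =>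
          List.mem_cons_of_mem _ (hqp (List.mem_cons_of_mem _ ha))
        have hrv : y ∉ r.support := by simpa using hqv
        by_cases hxz : x = z
        · subst hxz
          exact ⟨r, hrp, fun h => hrv (List.mem_of_mem_tail h)⟩
        · refine ⟨.cons (hv hxy.symm hyz hxz) r, ?_, by simpa using hrv⟩
          simpa [Walk.support_cons] using hrp
    · refine ⟨.cons hxy q, ?_, ?_⟩
      · simpa [Walk.support_cons] using List.cons_subset_cons x hqp
      · rw [Walk.support_cons, List.tail_cons, ← q.cons_tail_support, List.mem_cons, not_or]
        exact ⟨Ne.symm hy, hqv⟩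

lemma mem_floodRegion_of_eqOn {col col' : V → C} {v w u : V}
    (hv : G.IsClique (G.neighborSet v)) (hcol : Set.EqOn col col' {v}ᶜ)
    (hw : w ≠ v) (hu : u ≠ v) (h : u ∈ floodRegion G col w) : u ∈ floodRegion G col' w := by
  obtain ⟨p, hp⟩ := h
  obtain ⟨q, hqp, hqv⟩ := p.exists_support_subset_notMem_tail hv hu
  have hqv' : v ∉ q.support := by
    rw [← q.cons_tail_support, List.mem_cons, not_or]
    exact ⟨hw.symm, hqv⟩
  refine ⟨q, fun x hx => ?_⟩
  have hxv : x ≠ v := ne_of_mem_of_not_mem hx hqv'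
  rw [← hcol hxv, ← hcol hw]
  exact hp x (hqp hx)

lemma floodStep_eqOn {col col' : V → C} {v w : V} (hv : G.IsClique (G.neighborSet v))
    (hcol : Set.EqOn col col' {v}ᶜ) (hw : w ≠ v) (c : C) :
    Set.EqOn (floodStep G col w c) (floodStep G col' w c) {v}ᶜ := by
  intro u hu
  have hiff : u ∈ floodRegion G col w ↔ u ∈ floodRegion G col' w :=
    ⟨mem_floodRegion_of_eqOn hv hcol hw hu, mem_floodRegion_of_eqOn hv hcol.symm hw hu⟩
  simp only [floodStep, hiff]
  split_ifs
  · rfl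
  · exact hcol hu

lemma floodSeq_eqOn {col col' : V → C} {v : V} (hv : G.IsClique (G.neighborSet v))
    (hcol : Set.EqOn col col' {v}ᶜ) {ops : List (V × C)} (hops : ∀ op ∈ ops, op.1 ≠ v) :
    Set.EqOn (floodSeq G col ops) (floodSeq G col' ops) {v}ᶜ := by
  induction ops generalizing col col' with
  | nil => exact hcol
  | cons op ops ih =>
    exact ih (floodStep_eqOn hv hcol (hops op List.mem_cons_self) op.2)
      fun o ho => hops o (List.mem_cons_of_mem _ ho)

lemma floodSeq_append (col : V → C) (ops₁ ops₂ : List (V × C)) :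
    floodSeq G col (ops₁ ++ ops₂) = floodSeq G (floodSeq G col ops₁) ops₂ := by
  induction ops₁ generalizing col with
  | nil => rfl
  | cons op ops ih => exact ih _

lemma floodSeq_map_prodMk {c : C} (L : List V) {col : V → C} {u : V}
    (hu : col u = c ∨ u ∈ L) : floodSeq G col (L.map (·, c)) u = c := by
  induction L generalizing col with
  | nil => exact hu.resolve_right (by simp)
  | cons w L ih =>
    refine ih ?_
    rcases hu with hu | hu
    · left
      simp [floodStep, hu]
    · rcases List.mem_cons.mp hu with rfl | hu
      · exact .inl (if_pos (mem_floodRegion_self col u))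
      · exact .inr hu

lemma exists_isFloodSolution [Fintype V] [Nonempty V] (col : V → C) :
    ∃ ops, IsFloodSolution G col ops := by
  obtain ⟨v⟩ := ‹Nonempty V›
  exact ⟨_, col v, fun u =>
    floodSeq_map_prodMk _ (.inr (Finset.mem_toList.mpr (Finset.mem_univ u)))⟩

lemma exists_shortest_isFloodSolution [Fintype V] [Nonempty V] (col : V → C) :
    ∃ ops, IsFloodSolution G col ops ∧
      ∀ ops', IsFloodSolution G col ops' → ops.length ≤ ops'.length := by
  obtain ⟨ops, hops, hmin⟩ := (measure (List.length (α := V × C))).wf.has_min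
    {ops | IsFloodSolution G col ops} (exists_isFloodSolution col)
  exact ⟨ops, hops, fun ops' h => not_lt.mp (hmin ops' h)⟩

end Flooding

section SplitGraph

variable {V C : Type*} {G : SimpleGraph V} {K : Set V}

lemma neighborSet_subset_of_isIndepSet_compl (hKc : G.IsIndepSet Kᶜ) {v : V} (hv : v ∉ K) :
    G.neighborSet v ⊆ K := fun x hvx => by
  by_contra hx
  exact hKc hv hx hvx.ne hvx

lemma exists_walk_support_subset_insert (hG : G.Connected) (hK : G.IsClique K)
    (hKc : G.IsIndepSet Kᶜ) {x : V} (hx : x ∈ K) (u : V) :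
    ∃ p : G.Walk x u, ∀ z ∈ p.support, z ∈ insert u K := by
  have hwalkK : ∀ y ∈ K, ∃ p : G.Walk x y, ∀ z ∈ p.support, z ∈ K := by
    intro y hy
    by_cases hxy : x = y
    · subst hxy
      exact ⟨.nil, by simpa⟩
    · exact ⟨.cons (hK hx hy hxy) .nil, by simp [hx, hy]⟩
  by_cases hu : u ∈ K
  · obtain ⟨p, hp⟩ := hwalkK u hu
    exact ⟨p, fun z hz => Set.mem_insert_of_mem _ (hp z hz)⟩
  · have : Nontrivial V := nontrivial_of_ne x u (ne_of_mem_of_not_mem hx hu)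
    obtain ⟨y, huy⟩ := hG.preconnected.exists_adj_of_nontrivial u
    obtain ⟨p, hp⟩ := hwalkK y (neighborSet_subset_of_isIndepSet_compl hKc hu huy)
    refine ⟨p.concat huy.symm, fun z hz => ?_⟩
    rw [Walk.support_concat, List.mem_append, List.mem_singleton] at hz
    rcases hz with hz | rfl
    · exact Set.mem_insert_of_mem _ (hp z hz)
    · exact Set.mem_insert z K

lemma isFloodSolution_singleton_of_forall_ne (hG : G.Connected) (hK : G.IsClique K)
    (hKc : G.IsIndepSet Kᶜ) {col : V → C} {v x : V} {c : C} (hv : v ∉ K) (hx : x ∈ K)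
    (hcol : ∀ u ≠ v, col u = c) : IsFloodSolution G col [(x, col v)] := by
  refine ⟨col v, fun u => ?_⟩
  change floodStep G col x (col v) u = col v
  by_cases huv : u = v
  · subst huv
    simp [floodStep]
  · obtain ⟨p, hp⟩ := exists_walk_support_subset_insert hG hK hKc hx u
    have hcx : col x = c := hcol x (ne_of_mem_of_not_mem hx hv)
    refine if_pos ⟨p, fun z hz => ?_⟩
    rw [hcx]
    rcases hp z hz with rfl | hzK
    · exact hcol z huv
    · exact hcol z (ne_of_mem_of_not_mem hzK hv)

lemma exists_clique_isFloodSolution_of_floodStep (hG : G.Connected) (hK : G.IsClique K)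
    (hKc : G.IsIndepSet Kᶜ) {col : V → C} {v : V} {c : C} (hv : v ∉ K)
    (hreg : ∀ w ∈ K, w ∉ floodRegion G col v) {ops : List (V × C)}
    (hsol : IsFloodSolution G (floodStep G col v c) ops) (hopsK : ∀ op ∈ ops, op.1 ∈ K) :
    ∃ ops', IsFloodSolution G col ops' ∧ (∀ op ∈ ops', op.1 ∈ K) ∧
      ops'.length ≤ ops.length + 1 := by
  have hnbrK := neighborSet_subset_of_isIndepSet_compl hKc hv
  have hstep : Set.EqOn col (floodStep G col v c) {v}ᶜ := fun u hu => by
    have hur : u ∉ floodRegion G col v := fun h => by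
      obtain ⟨x, hvx, hx⟩ := exists_adj_mem_floodRegion h hu
      exact hreg x (hnbrK hvx) hx
    exact (if_neg hur).symm
  obtain ⟨cf, hcf⟩ := hsol
  have hoff : ∀ u ≠ v, floodSeq G col ops u = cf := fun u hu =>
    (floodSeq_eqOn (hK.subset hnbrK) hstep
      (fun op hop => ne_of_mem_of_not_mem (hopsK op hop) hv) hu).trans (hcf u)
  by_cases htriv : ∀ u, u = v
  · exact ⟨[], ⟨col v, fun u => by rw [htriv u]; rfl⟩, by simp, by simp⟩
  push Not at htriv
  obtain ⟨u, hu⟩ := htriv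
  have : Nontrivial V := nontrivial_of_ne u v hu
  obtain ⟨x, hvx⟩ := hG.preconnected.exists_adj_of_nontrivial v
  have hx : x ∈ K := hnbrK hvx
  obtain ⟨c', hc'⟩ := isFloodSolution_singleton_of_forall_ne hG hK hKc hv hx hoff
  refine ⟨ops ++ [(x, floodSeq G col ops v)], ⟨c', fun u => ?_⟩, ?_, by simp⟩
  · rw [floodSeq_append]
    exact hc' u
  · simpa [or_imp, forall_and, hx] using hopsK

theorem exists_clique_isFloodSolution_length_le (hG : G.Connected) (hK : G.IsClique K)
    (hKc : G.IsIndepSet Kᶜ) {col : V → C} {ops : List (V × C)}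
    (hops : IsFloodSolution G col ops) :
    ∃ ops', IsFloodSolution G col ops' ∧ (∀ op ∈ ops', op.1 ∈ K) ∧
      ops'.length ≤ ops.length := by
  induction ops generalizing col with
  | nil => exact ⟨[], hops, by simp, le_rfl⟩
  | cons op ops ih =>
    obtain ⟨v, c⟩ := op
    obtain ⟨ops', hsol', hK', hlen'⟩ := ih hops
    by_cases hreg : ∃ w ∈ K, w ∈ floodRegion G col v
    · obtain ⟨w, hwK, hw⟩ := hreg
      refine ⟨(w, c) :: ops', ?_, ?_, by simpa using hlen'⟩
      · change IsFloodSolution G (floodStep G col w c) ops'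
        rwa [floodStep_eq_of_mem hw]
      · simpa [hwK] using hK'
    · push Not at hreg
      have hv : v ∉ K := fun h => hreg v h (mem_floodRegion_self col v)
      obtain ⟨ops'', hsol'', hK'', hlen''⟩ :=
        exists_clique_isFloodSolution_of_floodStep hG hK hKc hv hreg hsol' hK'
      exact ⟨ops'', hsol'', hK'', hlen''.trans (by simpa using hlen')⟩

end SplitGraph

theorem splitGraph_exists_optimal_clique_solution_general
    {V C : Type*} [Fintype V] (G : SimpleGraph V) (hG : G.Connected)
    (col : V → C) (K I : Set V)
    (hunion : K ∪ I = Set.univ)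
    (hclique : G.IsClique K)
    (hindep : ∀ u ∈ I, ∀ w ∈ I, ¬ G.Adj u w) :
    ∃ ops : List (V × C),
      IsFloodSolution G col ops ∧
      (∀ op ∈ ops, op.1 ∈ K) ∧
      ∀ ops' : List (V × C), IsFloodSolution G col ops' →
        ops.length ≤ ops'.length := by
  have hI : G.IsIndepSet I := fun u hu w hw _ => hindep u hu w hw
  have hKc : G.IsIndepSet Kᶜ := hI.mono (Set.compl_subset_iff_union.mpr hunion)
  have := hG.nonempty
  obtain ⟨ops, hsol, hmin⟩ := exists_shortest_isFloodSolution (G := G) col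
  obtain ⟨ops', hsol', hK', hlen⟩ := exists_clique_isFloodSolution_length_le hG hclique hKc hsol
  exact ⟨ops', hsol', hK', fun ops'' h => hlen.trans (hmin ops'' h)⟩

/-- Let `G` be a connected precolored split graph whose vertex set is
partitioned into a nonempty clique `K` and an independent set `I`. Then there is a
solution of the free flooding game on `G` of minimum length in which every coloring
operation recolors a vertex of `K`. -/
theorem splitGraph_exists_optimal_clique_solution
    {V C : Type*} [Fintype V] (G : SimpleGraph V) (hG : G.Connected)
    (col : V → C) (K I : Set V)
    (hunion : K ∪ I = Set.univ) (hdisj : Disjoint K I)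
    (hKne : K.Nonempty)
    (hclique : G.IsClique K)
    (hindep : ∀ u ∈ I, ∀ w ∈ I, ¬ G.Adj u w) :
    ∃ ops : List (V × C),
      IsFloodSolution G col ops ∧
      (∀ op ∈ ops, op.1 ∈ K) ∧
      ∀ ops' : List (V × C), IsFloodSolution G col ops' →
        ops.length ≤ ops'.length :=
  splitGraph_exists_optimal_clique_solution_general G hG col K I hunion hclique hindep
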